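/- For the ℓ₂-ℓ₂ oblivious estimator with fixed sampling probabilities p_i = ‖A_{i:}‖₂²/‖A‖_F² and q_j = ‖A_{:j}‖₂²/‖A‖_F², the estimator g̃(w) = (Aᵀy₀ + A_{i:}(y_i − (y₀)_i)/p_i, −Ax₀ − A_{:j}(x_j − (x₀)_j)/q_j) satisfies E‖g̃(w) − (Aᵀy₀, −Ax₀)‖₂² = ‖A‖_F²(‖x − x₀‖₂² + ‖y − y₀‖₂²). -/
import Mathlib


noncomputable def l2sq {d : ℕ} (v : Fin d → ℝ) : ℝ := ∑ i, v i ^ 2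

lemma l2sq_ne_zero {d : ℕ} {v : Fin d → ℝ} (hv : v ≠ 0) : l2sq v ≠ 0 := by
  intro h
  apply hv
  funext i
  have := (Finset.sum_eq_zero_iff_of_nonneg (fun i _ => sq_nonneg (v i))).mp h i
    (Finset.mem_univ i)
  exact pow_eq_zero_iff (by norm_num) |>.mp this

lemma l2sq_smul {d : ℕ} (c : ℝ) (v : Fin d → ℝ) : l2sq (c • v) = c ^ 2 * l2sq v := by
  unfold l2sq
  rw [Finset.mul_sum]
  exact Finset.sum_congr rfl fun i _ => by simp [mul_pow]

/-- the ℓ₂-ℓ₂ oblivious ("factored splits") estimator with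
fixed probabilities `p_i = ‖A_{i:}‖₂²/‖A‖_F²`, `q_j = ‖A_{:j}‖₂²/‖A‖_F²`
satisfies `E‖g̃(w) − (Aᵀy₀, −Ax₀)‖₂² = ‖A‖_F² (‖x−x₀‖₂² + ‖y−y₀‖₂²)`. -/
theorem l2_l2_oblivious_estimator {m n : ℕ}
    (A : Matrix (Fin m) (Fin n) ℝ)
    (hrows : ∀ i, A i ≠ 0)
    (hcols : ∀ j, (fun i => A i j) ≠ 0)
    (x x₀ : Fin n → ℝ) (y y₀ : Fin m → ℝ)
    (p : Fin m → ℝ) (hp : ∀ i, p i = l2sq (A i) / ∑ i', ∑ j', A i' j' ^ 2)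
    (q : Fin n → ℝ)
    (hq : ∀ j, q j = l2sq (fun i => A i j) / ∑ i', ∑ j', A i' j' ^ 2)
    (Gx : Fin m → Fin n → ℝ) (Gy : Fin n → Fin m → ℝ)
    (hGx : ∀ i, Gx i =
      (fun k => ∑ i', A i' k * y₀ i') + ((y i - y₀ i) / p i) • A i)
    (hGy : ∀ j, Gy j =
      (fun i => -∑ j', A i j' * x₀ j') - ((x j - x₀ j) / q j) • (fun i => A i j)) :
    ∑ i, p i * l2sq (Gx i - fun k => ∑ i', A i' k * y₀ i') +
      ∑ j, q j * l2sq (Gy j - fun i' => -∑ j', A i' j' * x₀ j') =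
      (∑ i, ∑ j, A i j ^ 2) * (l2sq (x - x₀) + l2sq (y - y₀)) := by
  set S := ∑ i', ∑ j', A i' j' ^ 2 with hSdef
  by_cases hS0 : S = 0
  · rcases Nat.eq_zero_or_pos m with hm | hm
    · rcases Nat.eq_zero_or_pos n with hn | hn
      · subst hm; subst hn
        simp [hS0]
      · subst hm
        exact absurd (funext fun i => i.elim0) (hcols ⟨0, hn⟩)
    · have hall : ∀ i j, A i j = 0 := by
        intro i j
        have h1 := (Finset.sum_eq_zero_iff_of_nonneg
          (fun i _ => Finset.sum_nonneg fun j _ => sq_nonneg (A i j))).mp hS0 i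
          (Finset.mem_univ i)
        have h2 := (Finset.sum_eq_zero_iff_of_nonneg
          (fun j _ => sq_nonneg (A i j))).mp h1 j (Finset.mem_univ j)
        exact pow_eq_zero_iff (by norm_num) |>.mp h2
      exact absurd (funext fun j => hall ⟨0, hm⟩ j) (hrows ⟨0, hm⟩)
  · have h1 : ∀ i, p i * l2sq (Gx i - fun k => ∑ i', A i' k * y₀ i')
        = S * (y i - y₀ i) ^ 2 := by
      intro i
      have hL : l2sq (A i) ≠ 0 := l2sq_ne_zero (hrows i)
      have hdiff : (Gx i - fun k => ∑ i', A i' k * y₀ i')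
          = ((y i - y₀ i) / p i) • A i := by
        rw [hGx i, add_sub_cancel_left]
      rw [hdiff, l2sq_smul, div_pow, hp i]
      field_simp
    have h2 : ∀ j, q j * l2sq (Gy j - fun i' => -∑ j', A i' j' * x₀ j')
        = S * (x j - x₀ j) ^ 2 := by
      intro j
      have hL : l2sq (fun i => A i j) ≠ 0 := l2sq_ne_zero (hcols j)
      have hdiff : (Gy j - fun i' => -∑ j', A i' j' * x₀ j')
          = (-((x j - x₀ j) / q j)) • (fun i => A i j) := by
        rw [hGy j, sub_sub_cancel_left, neg_smul]
      rw [hdiff, l2sq_smul, neg_pow, div_pow, hq j]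
      simp only [Even.neg_pow (by norm_num : Even 2)]
      field_simp
    simp only [h1, h2, ← Finset.mul_sum]
    have hy : ∑ i, (y i - y₀ i) ^ 2 = l2sq (y - y₀) := by
      unfold l2sq; exact Finset.sum_congr rfl fun i _ => by simp
    have hx : ∑ j, (x j - x₀ j) ^ 2 = l2sq (x - x₀) := by
      unfold l2sq; exact Finset.sum_congr rfl fun j _ => by simp
    rw [hx, hy]; ring
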